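/- Let p be prime and C the basic p×p circulant permutation matrix (C^p = I). The (p−1)p × (p−1)p block matrix N = [C^{ij}] (i, j = 1,…,p−1) satisfies NNᵀ = (p−1)·I_{(p−1)p} + ((J−I)_{p−1} ⊗ (J−I)_p); i.e. N is the incidence matrix of a symmetric rectangular design with v = p(p−1), k = p−1, λ₁ = λ₂ = 0, λ₃ = 1, m = p−1, n = p. -/

import Mathlib

/-!
The power `C ^ n` is the shift `x ↦ x + n` on `ZMod p`, so the `((i, x), (k, z))` entry of `N * Nᵀ`
counts the `j ∈ {1, …, p - 1}` with `x + i j = z + k j`, i.e. the nonzero solutions `u` of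
`(i - k) u = z - x` in the field `ZMod p`. For `i = k` there are `p - 1` of them if `x = z` and none
otherwise; for `i ≠ k` there is exactly one solution, and it is nonzero iff `x ≠ z`.
-/

open Matrix Kronecker

def Jmat (α : Type*) [Fintype α] : Matrix α α ℝ := Matrix.of fun _ _ => 1

open Finset

theorem shift_pow {G R : Type*} [AddMonoid G] [Fintype G] [DecidableEq G] [Semiring R]
    (g : G) (n : ℕ) :
    (of fun x y => if y = x + g then 1 else 0 : Matrix G G R) ^ n
      = of fun x y => if y = x + n • g then 1 else 0 := by
  induction n with
  | zero => ext x y; simp [one_apply, eq_comm]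
  | succ n ih =>
    ext x y
    rw [pow_succ, ih, mul_apply, sum_eq_single (x + n • g)]
    · simp [succ_nsmul, add_assoc]
    · intro w _ hw; simp [hw]
    · simp

theorem sum_ite_eq_mul_ite_eq {α R : Type*} [Fintype α] [DecidableEq α] [Semiring R] (u v : α) :
    ∑ y, (if y = u then (1 : R) else 0) * (if y = v then 1 else 0) = if u = v then 1 else 0 := by
  simp [eq_comm]

namespace ZMod

theorem natCast_succ_injective {p : ℕ} :
    Function.Injective fun j : Fin (p - 1) => ((j + 1 : ℕ) : ZMod p) := by
  intro j k hjk
  have := congrArg val hjk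
  simp only at this
  rw [val_cast_of_lt (by omega), val_cast_of_lt (by omega)] at this
  exact Fin.ext (by omega)

theorem sum_fin_pred_eq_sum_ne_zero {p : ℕ} [NeZero p] {M : Type*} [AddCommMonoid M]
    (f : ZMod p → M) :
    ∑ j : Fin (p - 1), f ((j + 1 : ℕ) : ZMod p) = ∑ u ∈ ({0}ᶜ : Finset (ZMod p)), f u := by
  refine sum_nbij _ (fun j _ => ?_) natCast_succ_injective.injOn (fun u hu => ?_) fun _ _ => rfl
  · simp only [mem_compl, mem_singleton, natCast_eq_zero_iff]
    exact Nat.not_dvd_of_pos_of_lt j.val.succ_pos (by omega)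
  · have hu : u.val ≠ 0 := by simpa using hu
    refine ⟨⟨u.val - 1, by have := u.val_lt; omega⟩, by simp, ?_⟩
    simp [Nat.sub_add_cancel (Nat.one_le_iff_ne_zero.mpr hu)]

end ZMod

theorem sum_ne_zero_ite_add_mul_eq_of_ne {F R : Type*} [Field F] [Fintype F] [DecidableEq F]
    [AddCommMonoidWithOne R] {a b : F} (hab : a ≠ b) (x z : F) :
    ∑ u ∈ ({0}ᶜ : Finset F), (if x + a * u = z + b * u then (1 : R) else 0)
      = if x = z then 0 else 1 := by
  have hsol : ∀ u, x + a * u = z + b * u ↔ u = (a - b)⁻¹ * (z - x) := fun u => by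
    rw [eq_inv_mul_iff_mul_eq₀ (sub_ne_zero.mpr hab)]
    constructor <;> intro h <;> linear_combination h
  simp_rw [hsol, sum_ite_eq', mem_compl, mem_singleton, mul_eq_zero, inv_eq_zero, sub_eq_zero,
    eq_comm (a := z), hab, false_or]
  by_cases hxz : x = z <;> simp [hxz]

/-- Corollary 11(i): for `p` prime and `C` the basic circulant
permutation matrix of order `p`, the block matrix `N = [C^{ij}]`
(`i, j = 1,…,p−1`) satisfies `NNᵀ = (p−1)·I + (J−I)_{p−1} ⊗ (J−I)_p`, i.e. it
is the incidence matrix of a symmetric rectangular design with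
`v = p(p−1)`, `k = p−1`, `λ₁ = λ₂ = 0`, `λ₃ = 1`. -/
theorem circulant_powers_RD (p : ℕ) [hp : Fact p.Prime] [NeZero p]
    (C : Matrix (ZMod p) (ZMod p) ℝ)
    (hC : C = Matrix.of fun x y => if y = x + 1 then 1 else 0)
    (N : Matrix (Fin (p - 1) × ZMod p) (Fin (p - 1) × ZMod p) ℝ)
    (hN : N = fun a b => (C ^ ((a.1.val + 1) * (b.1.val + 1))) a.2 b.2) :
    N * Nᵀ = ((p : ℝ) - 1) • (1 : Matrix (Fin (p - 1) × ZMod p) (Fin (p - 1) × ZMod p) ℝ)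
      + (Jmat (Fin (p - 1)) - 1) ⊗ₖ (Jmat (ZMod p) - 1) := by
  ext ⟨i, x⟩ ⟨k, z⟩
  set a : Fin (p - 1) → ZMod p := fun j => ((j + 1 : ℕ) : ZMod p)
  have entry : (N * Nᵀ) (i, x) (k, z)
      = ∑ u ∈ ({0}ᶜ : Finset (ZMod p)), if x + a i * u = z + a k * u then 1 else 0 := by
    simp_rw [mul_apply, Fintype.sum_prod_type, transpose_apply, hN, hC, shift_pow, of_apply,
      nsmul_one, sum_ite_eq_mul_ite_eq]
    rw [← ZMod.sum_fin_pred_eq_sum_ne_zero]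
    simp only [a, Nat.cast_mul]
  rw [entry]
  simp only [Matrix.add_apply, Matrix.smul_apply, one_apply, kroneckerMap_apply, Matrix.sub_apply,
    Jmat, of_apply, Prod.mk.injEq, smul_eq_mul]
  by_cases hik : i = k
  · subst hik
    by_cases hxz : x = z
    · subst hxz
      simp [card_compl, Nat.cast_sub (NeZero.one_le : 1 ≤ p)]
    · simp [hxz]
  · rw [sum_ne_zero_ite_add_mul_eq_of_ne (ZMod.natCast_succ_injective.ne hik)]
    by_cases hxz : x = z <;> simp [hik, hxz]
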